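/- Let H = H_A ⊗ H_Ā with projection P_code = RR⁺ for an isometry R : E → H, where E = ⊗_{x} e_x is a tensor product of finite-dimensional bulk qudit spaces. Suppose complementary recovery holds (M_Ā = M_A'), and suppose for each bulk qudit x the local algebras M_a(x) = R⁺(M(x) ∩ M_A)R and M_ā(x) = R⁺(M(x) ∩ M_Ā)R, viewed inside L(e_x), satisfy bulk local complementarity M_ā(x) = M_a(x)'. Partition the bulk qudits into W[A] = {x : M_a(x) = L(e_x)}, W[Ā] = {x : M_ā(x) = L(e_x)}, and E[AĀ] the remainder. Then R⁺ M_A R = (⊗_{x∈W[A]} L(e_x)) ⊗ (⊗_{x∈E[AĀ]} M_a(x)), R⁺ M_Ā R = (⊗_{x∈E[AĀ]} M_ā(x)) ⊗ (⊗_{x∈W[Ā]} L(e_x)), and Z(R⁺ M_A R) = ⊗_{x∈E[AĀ]} Z(M_a(x)). -/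

import Mathlib

open Matrix Kronecker
open scoped Classical

noncomputable section

variable {X ιA ιB : Type*} [Fintype X] [DecidableEq X]
  {ι : X → Type*} [∀ x, Fintype (ι x)] [∀ x, DecidableEq (ι x)]
  [Fintype ιA] [Fintype ιB] [DecidableEq ιA] [DecidableEq ιB]

/-- The elementary tensor `⊗_x A x` of matrices, realized on `E = ⊗_x e_x ≅ ℂ^{∏ ι x}`. -/
def famKron (A : ∀ x, Matrix (ι x) (ι x) ℂ) : Matrix (∀ x, ι x) (∀ x, ι x) ℂ :=
  fun i j => ∏ x, A x (i x) (j x)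

/-- The operator `1 ⊗ ⋯ ⊗ O ⊗ ⋯ ⊗ 1` acting only on the bulk qudit `x`. -/
def onlyAt (x : X) (O : Matrix (ι x) (ι x) ℂ) : Matrix (∀ y, ι y) (∀ y, ι y) ℂ :=
  famKron (Function.update (fun y => (1 : Matrix (ι y) (ι y) ℂ)) x O)

/-- The tensor-product von Neumann algebra `⊗_x N x`, generated by the elementary tensors
with `A x ∈ N x`. -/
def tensorVNA (N : ∀ x, Set (Matrix (ι x) (ι x) ℂ)) :
    Set (Matrix (∀ x, ι x) (∀ x, ι x) ℂ) :=
  (StarAlgebra.adjoin ℂ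
    {M | ∃ A : ∀ x, Matrix (ι x) (ι x) ℂ, (∀ x, A x ∈ N x) ∧ M = famKron A} :
    StarSubalgebra ℂ (Matrix (∀ x, ι x) (∀ x, ι x) ℂ))

/-- The trivial algebra `ℂ·1 ⊆ L(e_x)` (a suppressed tensor factor). -/
def scalars (n : Type*) [Fintype n] [DecidableEq n] : Set (Matrix n n ℂ) :=
  Set.range fun c : ℂ => c • (1 : Matrix n n ℂ)

/-- The algebra `M_A` of logical operators reconstructible on `A`. -/
def MA (P : Matrix (ιA × ιB) (ιA × ιB) ℂ) : Set (Matrix (ιA × ιB) (ιA × ιB) ℂ) :=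
  {B | ∃ OA : Matrix ιA ιA ℂ,
    Commute (OA ⊗ₖ (1 : Matrix ιB ιB ℂ)) P ∧ B = P * (OA ⊗ₖ (1 : Matrix ιB ιB ℂ)) * P}

/-- The algebra `M_Ā` of logical operators reconstructible on `Ā`. -/
def MB (P : Matrix (ιA × ιB) (ιA × ιB) ℂ) : Set (Matrix (ιA × ιB) (ιA × ιB) ℂ) :=
  {B | ∃ OB : Matrix ιB ιB ℂ,
    Commute ((1 : Matrix ιA ιA ℂ) ⊗ₖ OB) P ∧ B = P * ((1 : Matrix ιA ιA ℂ) ⊗ₖ OB) * P}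

/-- The commutant of `M` within `L(H_code) = {B : B = P B P}`. -/
def cornerCommutant {n : Type*} [Fintype n]
    (P : Matrix n n ℂ) (M : Set (Matrix n n ℂ)) : Set (Matrix n n ℂ) :=
  {C | C = P * C * P ∧ ∀ B ∈ M, B * C = C * B}

/-- The pullback `R⁺ S R ⊆ L(E)` of a set of operators on `H = H_A ⊗ H_Ā`. -/
def pullback (R : Matrix (ιA × ιB) (∀ x, ι x) ℂ)
    (S : Set (Matrix (ιA × ιB) (ιA × ιB) ℂ)) : Set (Matrix (∀ x, ι x) (∀ x, ι x) ℂ) :=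
  (fun B => Rᴴ * B * R) '' S

/-- The local algebra `M_a(x) = R⁺(M(x) ∩ M_A)R` viewed inside `L(e_x)`:
those `O` with `R (1 ⊗ ⋯ ⊗ O ⊗ ⋯ ⊗ 1) R⁺ ∈ M_A`. -/
def MlocA (R : Matrix (ιA × ιB) (∀ x, ι x) ℂ) (x : X) : Set (Matrix (ι x) (ι x) ℂ) :=
  {O | R * onlyAt x O * Rᴴ ∈ MA (R * Rᴴ)}

/-- The local algebra `M_ā(x) = R⁺(M(x) ∩ M_Ā)R` viewed inside `L(e_x)`. -/
def MlocB (R : Matrix (ιA × ιB) (∀ x, ι x) ℂ) (x : X) : Set (Matrix (ι x) (ι x) ℂ) :=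
  {O | R * onlyAt x O * Rᴴ ∈ MB (R * Rᴴ)}


/-! The elementary tensors with slots in unital subspaces `N x` have commutant `⊗ (N x)'`: an
operator commuting with every `1 ⊗ ⋯ ⊗ O ⊗ ⋯ ⊗ 1`, `O ∈ N x`, has all its slot-`x` blocks in
`(N x)'`, and an operator whose slot-`x` blocks lie in subspaces `W x` for every `x` is a sum of
elementary tensors from the `W x`. Under the isometry `R`, `R⁺ M_A R` and `R⁺ M_Ā R` are
commuting ⋆-algebras containing `⊗ M_a(x)` and `⊗ M_ā(x)` respectively. Hence
`R⁺ M_A R ⊆ (⊗ M_ā(x))' = ⊗ M_ā(x)' = ⊗ M_a(x)''`, and the finite-dimensional double commutant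
theorem `M_a(x)'' = M_a(x)` closes the loop; symmetrically for `Ā`, and the centre is
`⊗ M_a(x) ∩ ⊗ M_ā(x) = ⊗ (M_a(x) ∩ M_ā(x))`. At a qudit with `M_a(x) = L(e_x)` the factor
`M_ā(x) = L(e_x)'` is `ℂ·1`, which is how the three cases of the statement arise. -/

section DoubleCommutant

variable {𝕜 E : Type*} [RCLike 𝕜] [NormedAddCommGroup E] [InnerProductSpace 𝕜 E] [CompleteSpace E]

theorem Submodule.commute_starProjection_of_mapsTo (U : Submodule 𝕜 E)
    [U.HasOrthogonalProjection] {a : E →L[𝕜] E} (ha : ∀ u ∈ U, a u ∈ U)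
    (ha' : ∀ u ∈ U, star a u ∈ U) : Commute a U.starProjection := by
  have compress {b : E →L[𝕜] E} (hb : ∀ u ∈ U, b u ∈ U) :
      b * U.starProjection = U.starProjection * b * U.starProjection :=
    ContinuousLinearMap.ext fun u =>
      ((U.starProjection_eq_self_iff).2 (hb _ (U.starProjection_apply_mem u))).symm
  have hstar := congrArg star (compress ha')
  simp only [star_mul, star_star, (isSelfAdjoint_starProjection U).star_eq, ← mul_assoc] at hstar
  exact (compress ha).trans hstar.symm

variable {n : Type*} [Fintype n] [DecidableEq n]

theorem Matrix.exists_mulVec_eq_of_mem_centralizer_centralizer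
    (W : StarSubalgebra 𝕜 (Matrix n n 𝕜)) {T : Matrix n n 𝕜}
    (hT : T ∈ Set.centralizer (Set.centralizer (W : Set (Matrix n n 𝕜)))) (v : n → 𝕜) :
    ∃ a ∈ W, T *ᵥ v = a *ᵥ v := by
  let e := Matrix.toEuclideanCLM (𝕜 := 𝕜) (n := n)
  have e_apply (a : Matrix n n 𝕜) (w : n → 𝕜) :
      e a (WithLp.toLp 2 w) = WithLp.toLp 2 (a *ᵥ w) := rfl
  let orbit : Submodule 𝕜 (EuclideanSpace 𝕜 n) :=
    W.toSubalgebra.toSubmodule.map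
      ((ContinuousLinearMap.apply 𝕜 _ (WithLp.toLp 2 v)).toLinearMap ∘ₗ e.toAlgEquiv.toLinearMap)
  have invariant (a) (ha : a ∈ W) : ∀ u ∈ orbit, e a u ∈ orbit := by
    rintro _ ⟨b, hb, rfl⟩
    exact ⟨a * b, W.mul_mem ha hb, by simp⟩
  -- the projection onto the `W`-invariant subspace `W v` lies in `W'`, so `T` preserves `W v`
  set p := orbit.starProjection
  have hp : e.symm p ∈ Set.centralizer (W : Set (Matrix n n 𝕜)) := by
    intro a ha
    simpa using congrArg e.symm (orbit.commute_starProjection_of_mapsTo (invariant a ha)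
      (by simpa [← map_star] using invariant _ (star_mem ha))).eq
  have hTp : e T * p = p * e T := by
    simpa using congrArg e (hT _ hp).symm
  have hv : WithLp.toLp 2 v ∈ orbit := ⟨1, one_mem W.toSubalgebra, by simp⟩
  have hTv : e T (WithLp.toLp 2 v) ∈ orbit := by
    rw [← orbit.starProjection_eq_self_iff.2 hv, ← mul_apply_eq_comp, hTp]
    exact orbit.starProjection_apply_mem _
  obtain ⟨a, ha, hav⟩ := hTv
  exact ⟨a, ha, WithLp.toLp_injective 2 (by simpa [e_apply] using hav.symm)⟩

end DoubleCommutant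

section Kronecker

variable {R m n : Type*} [Fintype m] [Fintype n] [DecidableEq n]

def Matrix.kroneckerOneStarAlgHom [DecidableEq m] [CommRing R] [StarRing R] :
    Matrix m m R →⋆ₐ[R] Matrix (m × n) (m × n) R where
  toFun A := A ⊗ₖ 1
  map_one' := one_kronecker_one
  map_mul' A B := by rw [← mul_kronecker_mul, one_mul]
  map_zero' := zero_kronecker _
  map_add' A B := add_kronecker A B 1
  commutes' r := by simp [Algebra.algebraMap_eq_smul_one, smul_kronecker]
  map_star' A := by simp [star_eq_conjTranspose, conjTranspose_kronecker]

def Matrix.oneKroneckerStarAlgHom [DecidableEq m] [CommRing R] [StarRing R] :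
    Matrix n n R →⋆ₐ[R] Matrix (m × n) (m × n) R where
  toFun A := 1 ⊗ₖ A
  map_one' := one_kronecker_one
  map_mul' A B := by rw [← mul_kronecker_mul, one_mul]
  map_zero' := kronecker_zero _
  map_add' A B := kronecker_add 1 A B
  commutes' r := by simp [Algebra.algebraMap_eq_smul_one, kronecker_smul]
  map_star' A := by simp [star_eq_conjTranspose, conjTranspose_kronecker]

@[simp] theorem Matrix.kroneckerOneStarAlgHom_apply [DecidableEq m] [CommRing R] [StarRing R]
    (A : Matrix m m R) : kroneckerOneStarAlgHom (n := n) A = A ⊗ₖ 1 := rfl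

variable [CommRing R]

theorem Matrix.kronecker_one_mul_apply (a : Matrix m m R) (C : Matrix (m × n) (m × n) R)
    (i j : m) (k l : n) :
    (a ⊗ₖ (1 : Matrix n n R) * C) (i, k) (j, l) = (a * of fun i j => C (i, k) (j, l)) i j := by
  simp [Matrix.mul_apply, Fintype.sum_prod_type, one_apply, ite_mul]

theorem Matrix.mul_kronecker_one_apply (a : Matrix m m R) (C : Matrix (m × n) (m × n) R)
    (i j : m) (k l : n) :
    (C * a ⊗ₖ (1 : Matrix n n R)) (i, k) (j, l) = ((of fun i j => C (i, k) (j, l)) * a) i j := by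
  simp [Matrix.mul_apply, Fintype.sum_prod_type, one_apply, mul_ite]

theorem Matrix.kronecker_one_mem_centralizer_centralizer {S : Set (Matrix m m R)}
    {T : Matrix m m R} (hT : T ∈ Set.centralizer (Set.centralizer S)) :
    T ⊗ₖ (1 : Matrix n n R) ∈
      Set.centralizer (Set.centralizer ((· ⊗ₖ (1 : Matrix n n R)) '' S)) := by
  intro C hC
  have block_mem (k l : n) : (of fun i j => C (i, k) (j, l)) ∈ Set.centralizer S := by
    intro a ha
    ext i j
    rw [← kronecker_one_mul_apply, ← mul_kronecker_one_apply, hC _ ⟨a, ha, rfl⟩]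
  ext ⟨i, k⟩ ⟨j, l⟩
  rw [kronecker_one_mul_apply, mul_kronecker_one_apply, hT _ (block_mem k l)]

end Kronecker

theorem Matrix.centralizer_centralizer_starSubalgebra {𝕜 n : Type*} [RCLike 𝕜] [Fintype n]
    [DecidableEq n] (W : StarSubalgebra 𝕜 (Matrix n n 𝕜)) :
    Set.centralizer (Set.centralizer (W : Set (Matrix n n 𝕜))) = W := by
  refine subset_antisymm (fun T hT => ?_) Set.subset_centralizer_centralizer
  let W₂ := W.map (kroneckerOneStarAlgHom (n := n))
  have hT₂ : T ⊗ₖ 1 ∈ Set.centralizer (Set.centralizer (W₂ : Set (Matrix (n × n) (n × n) 𝕜))) :=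
    kronecker_one_mem_centralizer_centralizer hT
  -- `(a ⊗ 1) ω` for `ω = ∑ i, e_i ⊗ e_i` lists the entries of `a`
  obtain ⟨_, ⟨a, ha, rfl⟩, h⟩ := exists_mulVec_eq_of_mem_centralizer_centralizer W₂ hT₂
    (fun p => if p.1 = p.2 then 1 else 0)
  suffices T = a from this ▸ ha
  refine Matrix.ext fun i k => ?_
  simpa [mulVec, dotProduct, Fintype.sum_prod_type, one_apply] using congrFun h (i, k)

section ElementaryTensors

variable {X : Type*} [Fintype X] {ι : X → Type*}

theorem famKron_conjTranspose (A : ∀ x, Matrix (ι x) (ι x) ℂ) :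
    (famKron A)ᴴ = famKron fun x => (A x)ᴴ := by
  ext c d
  simp [famKron]

theorem famKron_mul [DecidableEq X] [∀ x, Fintype (ι x)] (A B : ∀ x, Matrix (ι x) (ι x) ℂ) :
    famKron A * famKron B = famKron (A * B) := by
  ext c d
  simp only [famKron, Matrix.mul_apply, Pi.mul_apply, Finset.prod_univ_sum,
    Fintype.piFinset_univ, Finset.prod_mul_distrib]

variable [∀ x, DecidableEq (ι x)]

theorem famKron_one : famKron (1 : ∀ x, Matrix (ι x) (ι x) ℂ) = 1 := by
  ext c d
  simp only [famKron, Pi.one_apply, Matrix.one_apply, Finset.prod_boole, Finset.mem_univ,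
    true_implies, funext_iff]

theorem famKron_single (a b : ∀ x, ι x) :
    famKron (fun x => Matrix.single (a x) (b x) (1 : ℂ)) = Matrix.single a b 1 := by
  ext c d
  simp only [famKron, Matrix.single_apply, Finset.prod_boole, Finset.mem_univ, true_implies,
    funext_iff, forall_and]

def elementaryTensors (N : ∀ x, Set (Matrix (ι x) (ι x) ℂ)) :
    Set (Matrix (∀ x, ι x) (∀ x, ι x) ℂ) :=
  {M | ∃ A : ∀ x, Matrix (ι x) (ι x) ℂ, (∀ x, A x ∈ N x) ∧ M = famKron A}

variable [DecidableEq X]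

theorem onlyAt_apply (x : X) (O : Matrix (ι x) (ι x) ℂ) (c d : ∀ y, ι y) :
    onlyAt x O c d = if ∀ y ≠ x, c y = d y then O (c x) (d x) else 0 := by
  rw [onlyAt, famKron, ← Finset.mul_prod_erase _ _ (Finset.mem_univ x)]
  have rest : ∏ y ∈ Finset.univ.erase x,
      Function.update (fun y => (1 : Matrix (ι y) (ι y) ℂ)) x O y (c y) (d y) =
        if ∀ y ≠ x, c y = d y then 1 else 0 := by
    rw [Finset.prod_congr rfl fun y hy => by
      rw [Function.update_of_ne (Finset.ne_of_mem_erase hy), Matrix.one_apply]]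
    simp [Finset.prod_boole]
  rw [Function.update_self, rest]
  split_ifs <;> simp

theorem onlyAt_one (x : X) : onlyAt x (1 : Matrix (ι x) (ι x) ℂ) = 1 := by
  rw [onlyAt, Function.update_eq_self]
  exact famKron_one

theorem onlyAt_mem_elementaryTensors {N : ∀ x, Set (Matrix (ι x) (ι x) ℂ)} (h1 : ∀ x, 1 ∈ N x)
    {x : X} {O : Matrix (ι x) (ι x) ℂ} (hO : O ∈ N x) : onlyAt x O ∈ elementaryTensors N := by
  refine ⟨_, fun y => ?_, rfl⟩
  rcases eq_or_ne y x with rfl | hy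
  · simpa using hO
  · simpa [hy] using h1 y

variable [∀ x, Fintype (ι x)]

def onlyAtStarAlgHom (x : X) : Matrix (ι x) (ι x) ℂ →⋆ₐ[ℂ] Matrix (∀ y, ι y) (∀ y, ι y) ℂ where
  toFun := onlyAt x
  map_one' := onlyAt_one x
  map_mul' O O' := by
    rw [onlyAt, onlyAt, onlyAt, famKron_mul, ← Function.update_mul]
    exact congrArg (famKron <| Function.update · x _) (mul_one _).symm
  map_zero' := by ext; simp [onlyAt_apply]
  map_add' O O' := by ext; simp only [Matrix.add_apply, onlyAt_apply]; split_ifs <;> simp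
  commutes' r := by
    have hsmul : onlyAt x (r • 1) = r • onlyAt x (1 : Matrix (ι x) (ι x) ℂ) := by
      ext; simp only [Matrix.smul_apply, onlyAt_apply]; split_ifs <;> simp
    rw [Algebra.algebraMap_eq_smul_one, Algebra.algebraMap_eq_smul_one, hsmul, onlyAt_one]
  map_star' O := by
    simp only [onlyAt, Matrix.star_eq_conjTranspose, famKron_conjTranspose]
    congr 1
    funext y
    rcases eq_or_ne y x with rfl | hy
    · simp
    · simp [Function.update_of_ne hy]

theorem famKron_mem_of_forall_onlyAt_mem {S : Type*}
    [SetLike S (Matrix (∀ y, ι y) (∀ y, ι y) ℂ)] [SubmonoidClass S (Matrix (∀ y, ι y) (∀ y, ι y) ℂ)]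
    {s : S} {A : ∀ x, Matrix (ι x) (ι x) ℂ} (hA : ∀ x, onlyAt x (A x) ∈ s) : famKron A ∈ s := by
  have mem_partial (t : Finset X) : famKron (t.piecewise A 1) ∈ s := by
    induction t using Finset.induction_on with
    | empty => simp [famKron_one, one_mem]
    | insert x t hx ih =>
      have split : (insert x t).piecewise A 1 =
          Function.update (1 : ∀ y, Matrix (ι y) (ι y) ℂ) x (A x) * t.piecewise A 1 := by
        ext1 y
        rcases eq_or_ne y x with rfl | hy
        · simp [hx]
        · simp [hy]
      rw [split, ← famKron_mul]
      exact mul_mem (hA x) ih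
  simpa using mem_partial Finset.univ

end ElementaryTensors

section Blocks

variable {X : Type*} [DecidableEq X] {ι : X → Type*}

/-- The slots other than `x` of the row and column indices are frozen at `a` and `b`. -/
def blockAt (x : X) (a b : ∀ y, ι y) :
    Matrix (∀ y, ι y) (∀ y, ι y) ℂ →ₗ[ℂ] Matrix (ι x) (ι x) ℂ where
  toFun T := T.submatrix (Function.update a x) (Function.update b x)
  map_add' _ _ := rfl
  map_smul' _ _ := rfl

theorem blockAt_apply (x : X) (a b : ∀ y, ι y) (T : Matrix (∀ y, ι y) (∀ y, ι y) ℂ)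
    (i j : ι x) : blockAt x a b T i j = T (Function.update a x i) (Function.update b x j) := rfl

theorem blockAt_apply_self (x : X) (T : Matrix (∀ y, ι y) (∀ y, ι y) ℂ) (a b : ∀ y, ι y) :
    blockAt x a b T (a x) (b x) = T a b := by
  simp [blockAt_apply]

theorem blockAt_ext {x : X} {T S : Matrix (∀ y, ι y) (∀ y, ι y) ℂ}
    (h : ∀ a b, blockAt x a b T = blockAt x a b S) : T = S := by
  ext a b
  rw [← blockAt_apply_self x T, ← blockAt_apply_self x S, h]

def sliceMap (x : X) (f : Module.End ℂ (Matrix (ι x) (ι x) ℂ)) :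
    Module.End ℂ (Matrix (∀ y, ι y) (∀ y, ι y) ℂ) where
  toFun T := Matrix.of fun a b => f (blockAt x a b T) (a x) (b x)
  map_add' T S := by ext; simp
  map_smul' c T := by ext; simp

theorem sliceMap_eq_self {x : X} {f : Module.End ℂ (Matrix (ι x) (ι x) ℂ)}
    {T : Matrix (∀ y, ι y) (∀ y, ι y) ℂ} (h : ∀ a b, f (blockAt x a b T) = blockAt x a b T) :
    sliceMap x f T = T := by
  ext a b
  simp [sliceMap, h, blockAt_apply_self]

variable [Fintype X]

theorem famKron_update_apply (A : ∀ x, Matrix (ι x) (ι x) ℂ) (x : X)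
    (O : Matrix (ι x) (ι x) ℂ) (c d : ∀ y, ι y) :
    famKron (Function.update A x O) c d =
      O (c x) (d x) * ∏ y ∈ Finset.univ.erase x, A y (c y) (d y) := by
  rw [famKron, ← Finset.mul_prod_erase _ _ (Finset.mem_univ x), Function.update_self]
  congr 1
  exact Finset.prod_congr rfl fun y hy => by rw [Function.update_of_ne (Finset.ne_of_mem_erase hy)]

theorem blockAt_famKron (x : X) (A : ∀ y, Matrix (ι y) (ι y) ℂ) (a b : ∀ y, ι y) :
    blockAt x a b (famKron A) = (∏ y ∈ Finset.univ.erase x, A y (a y) (b y)) • A x := by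
  ext i j
  have := famKron_update_apply A x (A x) (Function.update a x i) (Function.update b x j)
  rw [Function.update_eq_self] at this
  rw [blockAt_apply, this, Matrix.smul_apply, smul_eq_mul, mul_comm, Function.update_self,
    Function.update_self]
  congr 1
  exact Finset.prod_congr rfl fun y hy => by
    simp [Function.update_of_ne (Finset.ne_of_mem_erase hy)]

theorem sliceMap_famKron (x : X) (f : Module.End ℂ (Matrix (ι x) (ι x) ℂ))
    (A : ∀ y, Matrix (ι y) (ι y) ℂ) :
    sliceMap x f (famKron A) = famKron (Function.update A x (f (A x))) := by
  ext a b
  simp [sliceMap, blockAt_famKron, famKron_update_apply, mul_comm]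

variable [∀ x, Fintype (ι x)] [∀ x, DecidableEq (ι x)]

theorem blockAt_mul_onlyAt (x : X) (O : Matrix (ι x) (ι x) ℂ)
    (T : Matrix (∀ y, ι y) (∀ y, ι y) ℂ) (a b : ∀ y, ι y) :
    blockAt x a b (T * onlyAt x O) = blockAt x a b T * O := by
  ext i j
  simp only [blockAt_apply, Matrix.mul_apply]
  refine (Fintype.sum_of_injective (Function.update b x) (Function.update_injective b x) _ _
    (fun e he => ?_) fun k => ?_).symm
  · rw [onlyAt_apply, if_neg, mul_zero]
    refine fun h => he ⟨e x, funext fun y => ?_⟩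
    rcases eq_or_ne y x with rfl | hy
    · simp
    · simp [hy, h y hy]
  · rw [onlyAt_apply, if_pos fun y hy => by simp [hy], Function.update_self, Function.update_self]

theorem blockAt_onlyAt_mul (x : X) (O : Matrix (ι x) (ι x) ℂ)
    (T : Matrix (∀ y, ι y) (∀ y, ι y) ℂ) (a b : ∀ y, ι y) :
    blockAt x a b (onlyAt x O * T) = O * blockAt x a b T := by
  ext i j
  simp only [blockAt_apply, Matrix.mul_apply]
  refine (Fintype.sum_of_injective (Function.update a x) (Function.update_injective a x) _ _
    (fun e he => ?_) fun k => ?_).symm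
  · rw [onlyAt_apply, if_neg, zero_mul]
    refine fun h => he ⟨e x, funext fun y => ?_⟩
    rcases eq_or_ne y x with rfl | hy
    · simp
    · simp [hy, (h y hy).symm]
  · rw [onlyAt_apply, if_pos fun y hy => by simp [hy], Function.update_self, Function.update_self]

theorem commute_onlyAt_iff {x : X} {O : Matrix (ι x) (ι x) ℂ}
    {T : Matrix (∀ y, ι y) (∀ y, ι y) ℂ} :
    Commute T (onlyAt x O) ↔ ∀ a b, Commute (blockAt x a b T) O := by
  refine ⟨fun h a b => ?_, fun h => blockAt_ext (x := x) fun a b => ?_⟩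
  · rw [Commute, SemiconjBy, ← blockAt_mul_onlyAt, h.eq, blockAt_onlyAt_mul]
  · rw [blockAt_mul_onlyAt, blockAt_onlyAt_mul, (h a b).eq]

end Blocks

section TensorProducts

variable {X : Type*} [Fintype X] [DecidableEq X] {ι : X → Type*} [∀ x, Fintype (ι x)]
  [∀ x, DecidableEq (ι x)]

theorem span_elementaryTensors_univ :
    Submodule.span ℂ (elementaryTensors fun x => (Set.univ : Set (Matrix (ι x) (ι x) ℂ))) = ⊤ := by
  refine Submodule.eq_top_iff'.2 fun T => ?_
  rw [Matrix.matrix_eq_sum_single T]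
  refine Submodule.sum_mem _ fun a _ => Submodule.sum_mem _ fun b _ => ?_
  rw [← mul_one (T a b), ← smul_eq_mul, ← Matrix.smul_single, ← famKron_single]
  exact Submodule.smul_mem _ _ (Submodule.subset_span ⟨_, fun _ => trivial, rfl⟩)

theorem mem_span_elementaryTensors_iff (W : ∀ x, Submodule ℂ (Matrix (ι x) (ι x) ℂ))
    {T : Matrix (∀ x, ι x) (∀ x, ι x) ℂ} :
    T ∈ Submodule.span ℂ (elementaryTensors fun x => W x) ↔ ∀ x a b, blockAt x a b T ∈ W x := by
  refine ⟨fun hT x a b => ?_, fun hT => ?_⟩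
  · refine (Submodule.span_le (p := (W x).comap (blockAt x a b)) |>.2 ?_) hT
    rintro _ ⟨A, hA, rfl⟩
    simpa [blockAt_famKron] using (W x).smul_mem _ (hA x)
  · -- A projection onto `W x` applied blockwise fixes `T` and replaces slot `x` of every
    -- elementary tensor by an element of `W x`; do this for one slot after another.
    have mem_partial (t : Finset X) : T ∈ Submodule.span ℂ
        (elementaryTensors fun x => (t.piecewise W (fun _ => ⊤) x : Set _)) := by
      induction t using Finset.induction_on with
      | empty => simp [span_elementaryTensors_univ]
      | insert x t hx ih =>
        obtain ⟨C, hC⟩ := (W x).exists_isCompl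
        let p := (W x).projection C hC
        rw [← sliceMap_eq_self (f := p) fun a b =>
          Submodule.projection_apply_of_mem_left hC (hT x a b)]
        refine Submodule.mem_comap.1 <|
          (Submodule.span_le (p := Submodule.comap (sliceMap x p) (Submodule.span ℂ _)) |>.2 ?_) ih
        rintro _ ⟨A, hA, rfl⟩
        refine Submodule.subset_span ⟨_, fun y => ?_, sliceMap_famKron x p A⟩
        rcases eq_or_ne y x with rfl | hy
        · simp [p]
        · simpa [hy] using hA y
    simpa using mem_partial Finset.univ

theorem centralizer_elementaryTensors {N : ∀ x, Set (Matrix (ι x) (ι x) ℂ)}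
    (h1 : ∀ x, 1 ∈ N x) :
    Set.centralizer (elementaryTensors N) =
      Submodule.span ℂ (elementaryTensors fun x => Set.centralizer (N x)) := by
  have hW : (elementaryTensors fun x => Set.centralizer (N x)) =
      elementaryTensors fun x => ((Subalgebra.centralizer ℂ (N x)).toSubmodule : Set _) := by
    simp
  refine subset_antisymm (fun T hT => ?_) ?_
  · rw [hW, SetLike.mem_coe, mem_span_elementaryTensors_iff]
    intro x a b O hO
    exact (commute_onlyAt_iff.1 (hT _ (onlyAt_mem_elementaryTensors h1 hO)).symm a b).symm.eq
  · refine Submodule.span_le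
      (p := (Subalgebra.centralizer ℂ (elementaryTensors N)).toSubmodule) |>.2 ?_
    rintro _ ⟨C, hC, rfl⟩ _ ⟨A, hA, rfl⟩
    simp only [famKron_mul]
    exact congrArg famKron (funext fun x => hC x (A x) (hA x))

theorem span_elementaryTensors_inf (W₁ W₂ : ∀ x, Submodule ℂ (Matrix (ι x) (ι x) ℂ)) :
    Submodule.span ℂ (elementaryTensors fun x => W₁ x) ⊓
        Submodule.span ℂ (elementaryTensors fun x => W₂ x) =
      Submodule.span ℂ (elementaryTensors (ι := ι) fun x => ↑(W₁ x ⊓ W₂ x)) := by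
  ext T
  simp only [Submodule.mem_inf, mem_span_elementaryTensors_iff, ← forall_and]

theorem tensorVNA_eq_span (N : ∀ x, StarSubalgebra ℂ (Matrix (ι x) (ι x) ℂ)) :
    tensorVNA (fun x => (N x : Set (Matrix (ι x) (ι x) ℂ))) =
      Submodule.span ℂ (elementaryTensors fun x => (N x : Set (Matrix (ι x) (ι x) ℂ))) := by
  let S : Submonoid (Matrix (∀ x, ι x) (∀ x, ι x) ℂ) :=
    { carrier := elementaryTensors fun x => N x
      one_mem' := ⟨1, fun x => one_mem (N x), famKron_one.symm⟩
      mul_mem' := by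
        rintro _ _ ⟨A, hA, rfl⟩ ⟨B, hB, rfl⟩
        exact ⟨A * B, fun x => mul_mem (hA x) (hB x), famKron_mul A B⟩ }
  have hstar : star (elementaryTensors (ι := ι) fun x => N x) ⊆ elementaryTensors fun x => N x := by
    rintro M ⟨A, hA, hM⟩
    refine ⟨fun x => star (A x), fun x => star_mem (hA x), ?_⟩
    rw [← star_star M, hM, Matrix.star_eq_conjTranspose, famKron_conjTranspose]
    rfl
  have := StarAlgebra.adjoin_eq_span (R := ℂ) (elementaryTensors (ι := ι) fun x => N x)
  rw [Set.union_eq_left.2 hstar, show (elementaryTensors (ι := ι) fun x => N x) = S from rfl,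
    Submonoid.closure_eq] at this
  exact congrArg (fun s : Submodule ℂ _ => (s : Set (Matrix (∀ x, ι x) (∀ x, ι x) ℂ))) this

/-- For `𝒜 = R⁺ M_A R` this is `M_a(x)`. -/
abbrev localAlgebra (𝒜 : StarSubalgebra ℂ (Matrix (∀ x, ι x) (∀ x, ι x) ℂ)) (x : X) :
    StarSubalgebra ℂ (Matrix (ι x) (ι x) ℂ) :=
  𝒜.comap (onlyAtStarAlgHom x)

theorem elementaryTensors_localAlgebra_subset
    (𝒜 : StarSubalgebra ℂ (Matrix (∀ x, ι x) (∀ x, ι x) ℂ)) :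
    elementaryTensors (fun x => (localAlgebra 𝒜 x : Set (Matrix (ι x) (ι x) ℂ))) ⊆ 𝒜 := by
  rintro _ ⟨A, hA, rfl⟩
  exact famKron_mem_of_forall_onlyAt_mem hA

theorem coe_eq_span_elementaryTensors_localAlgebra
    {𝒜 ℬ : StarSubalgebra ℂ (Matrix (∀ x, ι x) (∀ x, ι x) ℂ)}
    (hcomm : ∀ A ∈ 𝒜, ∀ B ∈ ℬ, A * B = B * A)
    (hloc : ∀ x, Set.centralizer (localAlgebra ℬ x : Set (Matrix (ι x) (ι x) ℂ)) =
      localAlgebra 𝒜 x) :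
    (𝒜 : Set (Matrix (∀ x, ι x) (∀ x, ι x) ℂ)) = Submodule.span ℂ
      (elementaryTensors fun x => (localAlgebra 𝒜 x : Set (Matrix (ι x) (ι x) ℂ))) := by
  refine subset_antisymm (fun A hA => ?_) (Submodule.span_le (p := 𝒜.toSubalgebra.toSubmodule)
    |>.2 (elementaryTensors_localAlgebra_subset 𝒜))
  have : A ∈ Set.centralizer (elementaryTensors fun x =>
      (localAlgebra ℬ x : Set (Matrix (ι x) (ι x) ℂ))) :=
    fun B hB => (hcomm A hA B (elementaryTensors_localAlgebra_subset ℬ hB)).symm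
  rwa [centralizer_elementaryTensors fun x => one_mem _, funext hloc] at this

theorem tensor_structure_of_local_complementarity
    {𝒜 ℬ : StarSubalgebra ℂ (Matrix (∀ x, ι x) (∀ x, ι x) ℂ)}
    (hcomm : ∀ A ∈ 𝒜, ∀ B ∈ ℬ, A * B = B * A)
    (hloc : ∀ x, (localAlgebra ℬ x : Set (Matrix (ι x) (ι x) ℂ)) =
      Set.centralizer (localAlgebra 𝒜 x)) :
    (𝒜 : Set (Matrix (∀ x, ι x) (∀ x, ι x) ℂ)) = Submodule.span ℂ
        (elementaryTensors fun x => (localAlgebra 𝒜 x : Set (Matrix (ι x) (ι x) ℂ))) ∧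
      (ℬ : Set (Matrix (∀ x, ι x) (∀ x, ι x) ℂ)) = Submodule.span ℂ
        (elementaryTensors fun x => (localAlgebra ℬ x : Set (Matrix (ι x) (ι x) ℂ))) ∧
      (𝒜 : Set (Matrix (∀ x, ι x) (∀ x, ι x) ℂ)) ∩ Set.centralizer 𝒜 = Submodule.span ℂ
        (elementaryTensors fun x => ((localAlgebra 𝒜 x ⊓ localAlgebra ℬ x : StarSubalgebra ℂ _) :
          Set (Matrix (ι x) (ι x) ℂ))) := by
  have hloc' (x : X) : Set.centralizer (localAlgebra ℬ x : Set (Matrix (ι x) (ι x) ℂ)) =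
      localAlgebra 𝒜 x := by
    rw [hloc, Matrix.centralizer_centralizer_starSubalgebra]
  have h𝒜 := coe_eq_span_elementaryTensors_localAlgebra hcomm hloc'
  have hℬ := coe_eq_span_elementaryTensors_localAlgebra (fun B hB A hA => (hcomm A hA B hB).symm)
    fun x => (hloc x).symm
  have hcent : Set.centralizer (𝒜 : Set (Matrix (∀ x, ι x) (∀ x, ι x) ℂ)) = ℬ := by
    refine subset_antisymm (fun C hC => ?_) fun B hB A hA => hcomm A hA B hB
    have := Set.centralizer_subset (elementaryTensors_localAlgebra_subset 𝒜) hC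
    rwa [centralizer_elementaryTensors fun x => one_mem _, funext fun x => (hloc x).symm, ← hℬ]
      at this
  refine ⟨h𝒜, hℬ, ?_⟩
  rw [hcent, h𝒜, hℬ]
  exact congrArg (fun W : Submodule ℂ _ => (W : Set (Matrix (∀ x, ι x) (∀ x, ι x) ℂ)))
    (span_elementaryTensors_inf (fun x => (localAlgebra 𝒜 x).toSubalgebra.toSubmodule)
      (fun x => (localAlgebra ℬ x).toSubalgebra.toSubmodule))

end TensorProducts

section Compression

variable {n m : Type*} [Fintype n] [Fintype m] [DecidableEq m] {R : Matrix n m ℂ}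

theorem conjTranspose_mul_mul_conjTranspose_of_isometry (hR : Rᴴ * R = 1) :
    Rᴴ * (R * Rᴴ) = Rᴴ := by
  rw [← Matrix.mul_assoc, hR, Matrix.one_mul]

theorem mul_conjTranspose_mul_of_isometry (hR : Rᴴ * R = 1) : R * Rᴴ * R = R := by
  rw [Matrix.mul_assoc, hR, Matrix.mul_one]

theorem isIdempotentElem_mul_conjTranspose_of_isometry (hR : Rᴴ * R = 1) :
    IsIdempotentElem (R * Rᴴ) := by
  rw [IsIdempotentElem, Matrix.mul_assoc, conjTranspose_mul_mul_conjTranspose_of_isometry hR]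

theorem compress_mul_compress (hR : Rᴴ * R = 1) {K : Matrix n n ℂ} (hK : Commute K (R * Rᴴ))
    (K' : Matrix n n ℂ) : Rᴴ * K * R * (Rᴴ * K' * R) = Rᴴ * (K * K') * R := by
  calc Rᴴ * K * R * (Rᴴ * K' * R) = Rᴴ * (K * (R * Rᴴ)) * K' * R := by
        simp only [Matrix.mul_assoc]
    _ = Rᴴ * (K * K') * R := by
        rw [hK.eq, ← Matrix.mul_assoc, conjTranspose_mul_mul_conjTranspose_of_isometry hR,
          Matrix.mul_assoc Rᴴ K K']

theorem compress_projection_mul_mul (hR : Rᴴ * R = 1) (K : Matrix n n ℂ) :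
    Rᴴ * (R * Rᴴ * K * (R * Rᴴ)) * R = Rᴴ * K * R := by
  rw [← Matrix.mul_assoc Rᴴ, ← Matrix.mul_assoc Rᴴ,
    conjTranspose_mul_mul_conjTranspose_of_isometry hR, Matrix.mul_assoc _ (R * Rᴴ) R,
    mul_conjTranspose_mul_of_isometry hR]

/-- `MA P = reconstructible P (L(H_A) ⊗ 1)` and `MB P = reconstructible P (1 ⊗ L(H_Ā))`. -/
def reconstructible (P : Matrix n n ℂ) (𝒦 : Set (Matrix n n ℂ)) : Set (Matrix n n ℂ) :=
  {B | ∃ K ∈ 𝒦, Commute K P ∧ B = P * K * P}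

theorem mul_eq_of_mem_reconstructible {P : Matrix n n ℂ} (hP : IsIdempotentElem P)
    {𝒦 : Set (Matrix n n ℂ)} {B : Matrix n n ℂ} (hB : B ∈ reconstructible P 𝒦) :
    P * B = B ∧ B * P = B := by
  obtain ⟨K, -, hKP, rfl⟩ := hB
  have hKP' : P * K * P = K * P := by rw [← hKP.eq, mul_assoc, hP.eq]
  rw [hKP']
  exact ⟨by rw [← mul_assoc, ← hKP.eq, mul_assoc, hP.eq], by rw [mul_assoc, hP.eq]⟩

theorem commute_of_mem_reconstructible {P : Matrix n n ℂ} (hP : IsIdempotentElem P)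
    {𝒦 : Set (Matrix n n ℂ)} {B : Matrix n n ℂ} (hB : B ∈ reconstructible P 𝒦) :
    Commute B P :=
  (mul_eq_of_mem_reconstructible hP hB).2.trans (mul_eq_of_mem_reconstructible hP hB).1.symm

theorem mul_mul_conjTranspose_mem_reconstructible_iff (hR : Rᴴ * R = 1)
    {𝒦 : Set (Matrix n n ℂ)} {M : Matrix m m ℂ} :
    R * M * Rᴴ ∈ reconstructible (R * Rᴴ) 𝒦 ↔
      M ∈ (fun B => Rᴴ * B * R) '' reconstructible (R * Rᴴ) 𝒦 := by
  constructor
  · refine fun h => ⟨_, h, ?_⟩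
    simp only [← Matrix.mul_assoc, hR, Matrix.one_mul]
    rw [Matrix.mul_assoc, hR, Matrix.mul_one]
  · rintro ⟨B, hB, rfl⟩
    have hPB := mul_eq_of_mem_reconstructible (isIdempotentElem_mul_conjTranspose_of_isometry hR) hB
    convert hB using 1
    calc R * (Rᴴ * B * R) * Rᴴ = R * Rᴴ * B * (R * Rᴴ) := by simp only [Matrix.mul_assoc]
      _ = B := by rw [hPB.1, hPB.2]

theorem commute_compress_of_mem_reconstructible (hR : Rᴴ * R = 1)
    {𝒦₁ 𝒦₂ : Set (Matrix n n ℂ)} {A B : Matrix n n ℂ} (hA : A ∈ reconstructible (R * Rᴴ) 𝒦₁)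
    (hB : B ∈ reconstructible (R * Rᴴ) 𝒦₂) (hAB : Commute A B) :
    Commute (Rᴴ * A * R) (Rᴴ * B * R) := by
  have hP := isIdempotentElem_mul_conjTranspose_of_isometry hR
  rw [Commute, SemiconjBy, compress_mul_compress hR (commute_of_mem_reconstructible hP hA),
    compress_mul_compress hR (commute_of_mem_reconstructible hP hB), hAB.eq]

variable [DecidableEq n]

/-- A ⋆-algebra because `K ↦ R⁺ K R` is multiplicative on the `K` commuting with `R R⁺`. -/
def compression (hR : Rᴴ * R = 1) (𝒦 : StarSubalgebra ℂ (Matrix n n ℂ)) :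
    StarSubalgebra ℂ (Matrix m m ℂ) where
  carrier := {M | ∃ K ∈ 𝒦, Commute K (R * Rᴴ) ∧ M = Rᴴ * K * R}
  mul_mem' := by
    rintro _ _ ⟨K, hK, hKP, rfl⟩ ⟨K', hK', hK'P, rfl⟩
    exact ⟨K * K', mul_mem hK hK', hKP.mul_left hK'P, compress_mul_compress hR hKP K'⟩
  one_mem' := ⟨1, one_mem 𝒦, Commute.one_left _, by rw [Matrix.mul_one, hR]⟩
  add_mem' := by
    rintro _ _ ⟨K, hK, hKP, rfl⟩ ⟨K', hK', hK'P, rfl⟩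
    exact ⟨K + K', add_mem hK hK', hKP.add_left hK'P, by rw [Matrix.mul_add, Matrix.add_mul]⟩
  zero_mem' := ⟨0, zero_mem 𝒦, Commute.zero_left _, by simp⟩
  algebraMap_mem' c := ⟨algebraMap ℂ _ c, algebraMap_mem 𝒦 c, Algebra.commutes c _, by
    simp [Algebra.algebraMap_eq_smul_one, hR]⟩
  star_mem' := by
    rintro _ ⟨K, hK, hKP, rfl⟩
    refine ⟨star K, star_mem hK, ?_, ?_⟩
    · simpa [Matrix.star_eq_conjTranspose] using hKP.star_star
    · simp [Matrix.star_eq_conjTranspose, Matrix.mul_assoc]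

theorem image_compress_reconstructible (hR : Rᴴ * R = 1) (𝒦 : StarSubalgebra ℂ (Matrix n n ℂ)) :
    (fun B => Rᴴ * B * R) '' reconstructible (R * Rᴴ) 𝒦 = compression hR 𝒦 := by
  ext M
  constructor
  · rintro ⟨_, ⟨K, hK, hKP, rfl⟩, rfl⟩
    exact ⟨K, hK, hKP, compress_projection_mul_mul hR K⟩
  · rintro ⟨K, hK, hKP, rfl⟩
    exact ⟨_, ⟨K, hK, hKP, rfl⟩, compress_projection_mul_mul hR K⟩

end Compression

section LocalFactors

variable {n : Type*} [Fintype n] [DecidableEq n]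

theorem centralizer_univ_eq_scalars :
    Set.centralizer (Set.univ : Set (Matrix n n ℂ)) = scalars n := by
  rw [Set.centralizer_univ, Matrix.center_eq_range]
  ext M
  simp [scalars, Matrix.smul_one_eq_diagonal]

variable {S T : Set (Matrix n n ℂ)}

theorem ite_univ_scalars_eq (hS : S = Set.centralizer T) :
    (if S = Set.univ then Set.univ else if T = Set.univ then scalars n else S) = S := by
  split_ifs with hSu hTu
  · exact hSu.symm
  · rw [hS, hTu, centralizer_univ_eq_scalars]
  · rfl

theorem ite_scalars_eq_inter (hT : T = Set.centralizer S) (hS : S = Set.centralizer T) :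
    (if S ≠ Set.univ ∧ T ≠ Set.univ then S ∩ Set.centralizer S else scalars n) = S ∩ T := by
  split_ifs with h
  · rw [hT]
  · rcases not_and_or.1 h with hSu | hTu
    · rw [hT, not_ne_iff.1 hSu, centralizer_univ_eq_scalars, Set.univ_inter]
    · rw [hS, not_ne_iff.1 hTu, centralizer_univ_eq_scalars, Set.inter_univ]

end LocalFactors

section CodeSubspace

variable {X ιA ιB : Type*} [Fintype X] [DecidableEq X] {ι : X → Type*} [∀ x, Fintype (ι x)]
  [∀ x, DecidableEq (ι x)] [Fintype ιA] [Fintype ιB] [DecidableEq ιA] [DecidableEq ιB]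

theorem MA_eq_reconstructible (P : Matrix (ιA × ιB) (ιA × ιB) ℂ) :
    MA P = reconstructible P (Matrix.kroneckerOneStarAlgHom (m := ιA) (n := ιB) (R := ℂ)).range := by
  ext B
  constructor
  · rintro ⟨O, hO, rfl⟩
    exact ⟨_, ⟨O, rfl⟩, hO, rfl⟩
  · rintro ⟨_, ⟨O, rfl⟩, hO, rfl⟩
    exact ⟨O, hO, rfl⟩

theorem MB_eq_reconstructible (P : Matrix (ιA × ιB) (ιA × ιB) ℂ) :
    MB P = reconstructible P (Matrix.oneKroneckerStarAlgHom (m := ιA) (n := ιB) (R := ℂ)).range := by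
  ext B
  constructor
  · rintro ⟨O, hO, rfl⟩
    exact ⟨_, ⟨O, rfl⟩, hO, rfl⟩
  · rintro ⟨_, ⟨O, rfl⟩, hO, rfl⟩
    exact ⟨O, hO, rfl⟩

variable {R : Matrix (ιA × ιB) (∀ x, ι x) ℂ}

theorem pullback_MA_eq_compression (hR : Rᴴ * R = 1) :
    pullback R (MA (R * Rᴴ)) = compression hR (Matrix.kroneckerOneStarAlgHom (R := ℂ)).range := by
  rw [MA_eq_reconstructible]
  exact image_compress_reconstructible hR _

theorem pullback_MB_eq_compression (hR : Rᴴ * R = 1) :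
    pullback R (MB (R * Rᴴ)) = compression hR (Matrix.oneKroneckerStarAlgHom (R := ℂ)).range := by
  rw [MB_eq_reconstructible]
  exact image_compress_reconstructible hR _

theorem MlocA_eq_localAlgebra (hR : Rᴴ * R = 1) (x : X) :
    MlocA R x = localAlgebra (compression hR (Matrix.kroneckerOneStarAlgHom (R := ℂ)).range) x := by
  ext O
  change R * onlyAt x O * Rᴴ ∈ MA (R * Rᴴ) ↔ _
  rw [MA_eq_reconstructible, mul_mul_conjTranspose_mem_reconstructible_iff hR,
    image_compress_reconstructible hR]
  rfl

theorem MlocB_eq_localAlgebra (hR : Rᴴ * R = 1) (x : X) :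
    MlocB R x = localAlgebra (compression hR (Matrix.oneKroneckerStarAlgHom (R := ℂ)).range) x := by
  ext O
  change R * onlyAt x O * Rᴴ ∈ MB (R * Rᴴ) ↔ _
  rw [MB_eq_reconstructible, mul_mul_conjTranspose_mem_reconstructible_iff hR,
    image_compress_reconstructible hR]
  rfl

theorem commute_compression_of_complementary (hR : Rᴴ * R = 1)
    (hcomplementary : cornerCommutant (R * Rᴴ) (MA (R * Rᴴ)) = MB (R * Rᴴ)) :
    ∀ A ∈ compression hR (Matrix.kroneckerOneStarAlgHom (R := ℂ)).range,
      ∀ B ∈ compression hR (Matrix.oneKroneckerStarAlgHom (R := ℂ)).range, A * B = B * A := by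
  intro A hA B hB
  rw [← SetLike.mem_coe, ← pullback_MA_eq_compression] at hA
  rw [← SetLike.mem_coe, ← pullback_MB_eq_compression] at hB
  obtain ⟨A', hA', rfl⟩ := hA
  obtain ⟨B', hB', rfl⟩ := hB
  have hAB : Commute A' B' := (hcomplementary ▸ hB' : B' ∈ cornerCommutant _ _).2 A' hA'
  rw [MA_eq_reconstructible] at hA'
  rw [MB_eq_reconstructible] at hB'
  exact (commute_compress_of_mem_reconstructible hR hA' hB' hAB).eq

end CodeSubspace

/-- Suppose `R : E → H` is an isometry (`P_code = RR⁺`), complementary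
recovery holds (`M_A' = M_Ā` within `L(H_code)`) and bulk local complementarity holds
(`M_ā(x) = M_a(x)'` inside `L(e_x)` for every bulk qudit `x`).  With the bulk partitioned
into `W[A] = {x : M_a(x) = L(e_x)}`, `W[Ā] = {x : M_ā(x) = L(e_x)}` and the entangling
surface `E[AĀ]` (the remainder), we have
`R⁺ M_A R = (⊗_{x∈W[A]} L(e_x)) ⊗ (⊗_{x∈E[AĀ]} M_a(x))`,
`R⁺ M_Ā R = (⊗_{x∈E[AĀ]} M_ā(x)) ⊗ (⊗_{x∈W[Ā]} L(e_x))`, and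
`Z(R⁺ M_A R) = ⊗_{x∈E[AĀ]} Z(M_a(x))` (suppressed trivial factors being `ℂ·1`). -/
theorem subregion_duality_structure
    (R : Matrix (ιA × ιB) (∀ x, ι x) ℂ)
    (hR : Rᴴ * R = 1)
    (hcomplementary : cornerCommutant (R * Rᴴ) (MA (R * Rᴴ)) = MB (R * Rᴴ))
    (hbulkLocal : ∀ x, MlocB R x = Set.centralizer (MlocA R x)) :
    pullback R (MA (R * Rᴴ)) =
      tensorVNA (fun x =>
        if MlocA R x = Set.univ then Set.univ
        else if MlocB R x = Set.univ then scalars (ι x)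
        else MlocA R x) ∧
    pullback R (MB (R * Rᴴ)) =
      tensorVNA (fun x =>
        if MlocB R x = Set.univ then Set.univ
        else if MlocA R x = Set.univ then scalars (ι x)
        else MlocB R x) ∧
    pullback R (MA (R * Rᴴ)) ∩ Set.centralizer (pullback R (MA (R * Rᴴ))) =
      tensorVNA (fun x =>
        if MlocA R x ≠ Set.univ ∧ MlocB R x ≠ Set.univ then
          MlocA R x ∩ Set.centralizer (MlocA R x)
        else scalars (ι x)) := by
  set 𝒜 := compression hR (Matrix.kroneckerOneStarAlgHom (m := ιA) (n := ιB) (R := ℂ)).range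
  set ℬ := compression hR (Matrix.oneKroneckerStarAlgHom (m := ιA) (n := ιB) (R := ℂ)).range
  have hMa := MlocA_eq_localAlgebra (ι := ι) hR
  have hMb := MlocB_eq_localAlgebra (ι := ι) hR
  have hloc (x : X) : (localAlgebra ℬ x : Set (Matrix (ι x) (ι x) ℂ)) =
      Set.centralizer (localAlgebra 𝒜 x) := by
    rw [← hMa, ← hMb, hbulkLocal]
  have hloc' (x : X) : (localAlgebra 𝒜 x : Set (Matrix (ι x) (ι x) ℂ)) =
      Set.centralizer (localAlgebra ℬ x) := by
    rw [hloc, Matrix.centralizer_centralizer_starSubalgebra]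
  obtain ⟨h𝒜, hℬ, hZ⟩ := tensor_structure_of_local_complementarity
    (commute_compression_of_complementary hR hcomplementary) hloc
  rw [pullback_MA_eq_compression hR, pullback_MB_eq_compression hR]
  refine ⟨?_, ?_, ?_⟩
  · rw [h𝒜, ← tensorVNA_eq_span]
    exact congrArg tensorVNA <| funext fun x => by
      rw [hMa, hMb]; exact (ite_univ_scalars_eq (hloc' x)).symm
  · rw [hℬ, ← tensorVNA_eq_span]
    exact congrArg tensorVNA <| funext fun x => by
      rw [hMa, hMb]; exact (ite_univ_scalars_eq (hloc x)).symm
  · rw [hZ, ← tensorVNA_eq_span]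
    exact congrArg tensorVNA <| funext fun x => by
      rw [hMa, hMb, StarSubalgebra.coe_inf]; exact (ite_scalars_eq_inter (hloc x) (hloc' x)).symm

end
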